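/- arXiv:1608.00089 — 10 statements merged into one kernel-verified Lean document; each statement's English description precedes it below -/
import Mathlib

section
/- Let D be a type, S a set of predicates on D, T ⊆ S, and φ_C = ⋀T. Let E_P and E_N be sets of examples such that every example in E_P is positive for φ_C and every example in E_N is negative for φ_C. Define S₀ = {q ∈ S | ∀ e ∈ E_P, q e} and φ = ⋀S₀ (the most specific hypothesis). Then every example in E_P is positive for φ and every example in E_N is negative for φ; i.e., whenever some conjunctive specification over S is consistent with the labeled examples, the most specific hypothesis is also consistent with them. -/
/-- If a conjunctive target `⋀T` over `S` is consistent with the labeled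
examples `E_P` (positive) and `E_N` (negative), then the most specific hypothesis
`⋀S₀`, where `S₀ = {q ∈ S | ∀ e ∈ E_P, q e}`, is also consistent with them. -/
theorem stmt_1 {D : Type*} (S T : Set (D → Prop)) (hT : T ⊆ S) (E_P E_N : Set D)
    (hP : ∀ e ∈ E_P, ∀ q ∈ T, q e)
    (hN : ∀ e ∈ E_N, ¬ (∀ q ∈ T, q e)) :
    (∀ e ∈ E_P, ∀ q ∈ {q ∈ S | ∀ e' ∈ E_P, q e'}, q e) ∧
      (∀ e ∈ E_N, ¬ (∀ q ∈ {q ∈ S | ∀ e' ∈ E_P, q e'}, q e)) := by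
  constructor
  · exact fun e he q hq => hq.2 e he
  · intro e he h
    exact hN e he (fun q hq => h q ⟨hT hq, fun e' he' => hP e' he' q hq⟩)
end

section
/- Let D be a type and S a set of predicates on D. Let T be a set of predicates each of which is the pointwise negation of some member of S, and let φ_C = ⋁T. Let E_P and E_N be sets of examples such that every example in E_P is positive for φ_C and every example in E_N is negative for φ_C. Define N₀ = { (fun d => ¬ q d) | q ∈ S and ∀ e ∈ E_N, q e }. Then: (1) every member of T belongs to N₀ (i.e., for each p ∈ T there is q ∈ S with p the negation of q and q satisfied by every example of E_N); (2) every example in E_P is positive for ⋁N₀; and (3) every example in E_N is negative for ⋁N₀. -/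
/-- Disjunctive case. If `T` consists of pointwise negations of members of
`S` and the target `⋁T` is consistent with labeled examples `E_P`, `E_N`, then with
`N₀ = { (fun d => ¬ q d) | q ∈ S, ∀ e ∈ E_N, q e }`: (1) `T ⊆ N₀`, (2) every example of
`E_P` is positive for `⋁N₀`, and (3) every example of `E_N` is negative for `⋁N₀`. -/
theorem stmt_2 {D : Type*} (S T : Set (D → Prop))
    (hT : ∀ p ∈ T, ∃ q ∈ S, p = fun d => ¬ q d)
    (E_P E_N : Set D)
    (hP : ∀ e ∈ E_P, ∃ p ∈ T, p e)
    (hN : ∀ e ∈ E_N, ¬ (∃ p ∈ T, p e)) :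
    (T ⊆ {p : D → Prop | ∃ q ∈ S, (∀ e ∈ E_N, q e) ∧ p = fun d => ¬ q d}) ∧
      (∀ e ∈ E_P, ∃ p ∈ {p : D → Prop | ∃ q ∈ S, (∀ e ∈ E_N, q e) ∧ p = fun d => ¬ q d}, p e) ∧
      (∀ e ∈ E_N, ¬ (∃ p ∈ {p : D → Prop | ∃ q ∈ S, (∀ e ∈ E_N, q e) ∧ p = fun d => ¬ q d}, p e)) := by
  have hsub : T ⊆ {p : D → Prop | ∃ q ∈ S, (∀ e ∈ E_N, q e) ∧ p = fun d => ¬ q d} := by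
    intro p hp
    obtain ⟨q, hqS, rfl⟩ := hT p hp
    refine ⟨q, hqS, fun e he => ?_, rfl⟩
    by_contra hq
    exact hN e he ⟨_, hp, hq⟩
  refine ⟨hsub, fun e he => ?_, fun e he ⟨p, hp, hpe⟩ => ?_⟩
  · obtain ⟨p, hpT, hpe⟩ := hP e he
    exact ⟨p, hsub hpT, hpe⟩
  · obtain ⟨q, _, hq, rfl⟩ := hp
    exact hpe (hq e he)
end

section
/- Let D be a type, S' a set of predicates on D, T ⊆ S', Rs ⊆ S', and φ_C = ⋀T. If an example e satisfies every predicate in S' \ Rs and e is negative for φ_C, then T ∩ Rs ≠ ∅; in particular, if Rs = {l} for a single predicate l, then l ∈ T (a negative distinguishing input that falsifies only l certifies that l is a conjunct of the target). -/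
/-- If an example `e` satisfies every predicate in `S' \ Rs` and is
negative for the conjunctive target `⋀T`, then `T ∩ Rs ≠ ∅`; in particular when
`Rs = {l}` is a singleton, `l ∈ T`. -/
theorem stmt_4 {D : Type*} (S' T Rs : Set (D → Prop)) (hT : T ⊆ S') (hRs : Rs ⊆ S')
    (e : D) (hsat : ∀ q ∈ S' \ Rs, q e)
    (hneg : ¬ (∀ q ∈ T, q e)) :
    (T ∩ Rs).Nonempty ∧ ∀ l : D → Prop, Rs = {l} → l ∈ T := by
  push_neg at hneg
  obtain ⟨q, hqT, hqe⟩ := hneg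
  have hqRs : q ∈ Rs := by
    by_contra h
    exact hqe (hsat q ⟨hT hqT, h⟩)
  refine ⟨⟨q, hqT, hqRs⟩, fun l hl => ?_⟩
  subst hl
  rwa [Set.mem_singleton_iff.mp hqRs] at hqT
end

section
/- Let D be a type, S a set of predicates on D, T ⊆ S, and φ_C = ⋀T. Let E_P and E_N be sets of examples with every member of E_P positive and every member of E_N negative for φ_C. Define S_N = {q ∈ S | ∃ e ∈ E_P, ¬ q e}, and for any example d set S_d = {q ∈ S \ S_N | ¬ q d}. Let e* be an example such that for every e' ∈ E_N, S_{e'} is not a subset of S_{e*}. Then the conjunctive specification φ = ⋀((S \ S_N) \ S_{e*}) is positive on every example of E_P, positive on e*, and negative on every example of E_N; hence there exists a conjunctive specification over S that is consistent with all the labeled examples and classifies e* as positive. -/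
/-- With `S_N = {q ∈ S | ∃ e ∈ E_P, ¬ q e}` and
`S_d = {q ∈ S \ S_N | ¬ q d}`, if `e*` is an example such that for every negative
example `e' ∈ E_N` the set `S_{e'}` is not contained in `S_{e*}`, then the conjunctive
specification over `(S \ S_N) \ S_{e*}` is positive on all of `E_P`, positive on `e*`,
and negative on all of `E_N`; hence some conjunctive specification over `S` is
consistent with the labeled data and classifies `e*` as positive. -/
theorem stmt_6 {D : Type*} (S T : Set (D → Prop)) (hT : T ⊆ S) (E_P E_N : Set D)
    (hP : ∀ e ∈ E_P, ∀ q ∈ T, q e)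
    (hN : ∀ e ∈ E_N, ¬ (∀ q ∈ T, q e))
    (S_N : Set (D → Prop)) (hSN : S_N = {q ∈ S | ∃ e ∈ E_P, ¬ q e})
    (Sd : D → Set (D → Prop)) (hSd : ∀ d : D, Sd d = {q ∈ S \ S_N | ¬ q d})
    (estar : D)
    (hstar : ∀ e' ∈ E_N, ¬ Sd e' ⊆ Sd estar) :
    (∀ e ∈ E_P, ∀ q ∈ (S \ S_N) \ Sd estar, q e) ∧
      (∀ q ∈ (S \ S_N) \ Sd estar, q estar) ∧
      (∀ e ∈ E_N, ¬ (∀ q ∈ (S \ S_N) \ Sd estar, q e)) ∧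
      (∃ T' ⊆ S, (∀ e ∈ E_P, ∀ q ∈ T', q e) ∧ (∀ e ∈ E_N, ¬ (∀ q ∈ T', q e)) ∧
        (∀ q ∈ T', q estar)) := by

  subst hSN
  have hpos : ∀ e ∈ E_P, ∀ q ∈ (S \ {q ∈ S | ∃ e ∈ E_P, ¬ q e}) \ Sd estar, q e := by
    intro e he q hq
    by_contra h
    exact hq.1.2 ⟨hq.1.1, e, he, h⟩
  have hst : ∀ q ∈ (S \ {q ∈ S | ∃ e ∈ E_P, ¬ q e}) \ Sd estar, q estar := by
    intro q hq
    by_contra h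
    exact hq.2 (by rw [hSd]; exact ⟨hq.1, h⟩)
  have hneg : ∀ e ∈ E_N, ¬ (∀ q ∈ (S \ {q ∈ S | ∃ e ∈ E_P, ¬ q e}) \ Sd estar, q e) := by
    intro e he hall
    obtain ⟨q, hq1, hq2⟩ := Set.not_subset.mp (hstar e he)
    rw [hSd] at hq1
    exact hq1.2 (hall q ⟨hq1.1, hq2⟩)
  exact ⟨hpos, hst, hneg, ⟨(S \ {q ∈ S | ∃ e ∈ E_P, ¬ q e}) \ Sd estar,
    fun q hq => hq.1.1, hpos, hneg, hst⟩⟩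
end

section
/- The map l ↦ φ_l from choice vectors l : Fin k → Bool to concepts is injective: if l ≠ l' then there exists an example d : Fin (k+1) → Bool with φ_l d and ¬ φ_{l'} d (namely the vector with coordinate 0 false and remaining coordinates l). Hence the concept class {φ_l | l : Fin k → Bool} contains exactly 2^k pairwise non-equivalent concepts, each expressible as a conjunction over the 2k predicates of S. -/
/-- The concept `φ_l` on Boolean vectors `d : Fin (k+1) → Bool`:
`φ_l d ↔ ∀ j : Fin k, d 0 = true ∨ d j.succ = l j`. -/
def concept (k : ℕ) (l : Fin k → Bool) (d : Fin (k + 1) → Bool) : Prop :=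
  ∀ j : Fin k, d 0 = true ∨ d j.succ = l j

lemma concept_self (k : ℕ) (l : Fin k → Bool) :
    concept k l (Fin.cons false l) := by
  intro j
  right
  simp

lemma concept_eq_of (k : ℕ) (l l' : Fin k → Bool)
    (h : concept k l' (Fin.cons false l)) : l = l' := by
  funext j
  rcases h j with h | h
  · simp at h
  · simpa using h

lemma concept_inj (k : ℕ) : Function.Injective (concept k) := by
  intro l l' h
  exact concept_eq_of k l l' (h ▸ concept_self k l)

/-- The map `l ↦ φ_l` is injective; for distinct `l ≠ l'` there is an
example positive for `φ_l` and negative for `φ_{l'}`; hence the concept class contains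
exactly `2 ^ k` pairwise non-equivalent concepts. -/
theorem stmt_8 (k : ℕ) (hk : 1 ≤ k) :
    Function.Injective (concept k) ∧
      (∀ l l' : Fin k → Bool, l ≠ l' →
        ∃ d : Fin (k + 1) → Bool, concept k l d ∧ ¬ concept k l' d) ∧
      (Set.range (concept k)).ncard = 2 ^ k := by
  refine ⟨concept_inj k, ?_, ?_⟩
  · intro l l' hne
    exact ⟨Fin.cons false l, concept_self k l,
      fun h => hne (concept_eq_of k l l' h)⟩
  · rw [← Nat.card_coe_set_eq, Nat.card_range_of_injective (concept_inj k)]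
    simp [Nat.card_eq_fintype_card]
end

section
/- Let k ≥ 1 and let Q be a finite set of examples d : Fin (k+1) → Bool such that for every pair of distinct choice vectors l ≠ l' there exists d ∈ Q with φ_l d ≠ φ_{l'} d (Q distinguishes every pair of concepts in the class). Then |Q| ≥ 2^k − 1. In particular, exact identification of a concept from this class by membership queries requires a number of examples exponential in the number of predicates. -/
/-- Any finite set of examples that distinguishes every pair of distinct
concepts `φ_l ≠ φ_{l'}` of the class must contain at least `2 ^ k - 1` examples. -/
theorem stmt_9 (k : ℕ) (hk : 1 ≤ k) (Q : Finset (Fin (k + 1) → Bool))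
    (hdist : ∀ l l' : Fin k → Bool, l ≠ l' →
      ∃ d ∈ Q, ¬ (concept k l d ↔ concept k l' d)) :
    2 ^ k - 1 ≤ Q.card := by
  classical
  set T := (Q.filter fun d => d 0 = false).image (fun d (j : Fin k) => d j.succ) with hT
  have hcompl : Tᶜ.card ≤ 1 := by
    by_contra h
    push_neg at h
    obtain ⟨l, hl, l', hl', hne⟩ := Finset.one_lt_card.mp h
    obtain ⟨d, hdQ, hdd⟩ := hdist l l' hne
    have hd0 : d 0 = false := by
      cases h0 : d 0
      · rfl
      · exact absurd (iff_of_true (fun j => Or.inl h0) (fun j => Or.inl h0)) hdd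
    have key : ∀ (m : Fin k → Bool), concept k m d ↔ (fun j => d j.succ) = m := by
      intro m
      constructor
      · intro h; funext j
        rcases h j with h' | h'
        · rw [hd0] at h'; exact absurd h' (by simp)
        · exact h'
      · intro h j; exact Or.inr (congrFun h j)
    have hmem : ∀ m, (fun j => d j.succ) = m → m ∈ T := by
      intro m hm
      exact Finset.mem_image.mpr ⟨d, Finset.mem_filter.mpr ⟨hdQ, hd0⟩, hm⟩
    rw [key l, key l'] at hdd
    by_cases h1 : (fun j => d j.succ) = l
    · exact (Finset.mem_compl.mp hl) (hmem l h1)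
    · by_cases h2 : (fun j => d j.succ) = l'
      · exact (Finset.mem_compl.mp hl') (hmem l' h2)
      · exact hdd (iff_of_false h1 h2)
  have hTcard : 2 ^ k - 1 ≤ T.card := by
    have h1 := Finset.card_compl T
    have htotal : Fintype.card (Fin k → Bool) = 2 ^ k := by simp
    omega
  calc 2 ^ k - 1 ≤ T.card := hTcard
    _ ≤ (Q.filter fun d => d 0 = false).card := Finset.card_image_le
    _ ≤ Q.card := Finset.card_filter_le _ _
end

section
/- Let k ≥ 1 and let Q be a finite set of examples d : Fin (k+1) → Bool, each with d 0 = false, such that the cardinality of Q is strictly less than 2^k. Then there exists a choice vector l : Fin k → Bool such that every example in Q is negative for φ_l (i.e., an adversary can answer 'negative' to all of fewer than 2^k membership queries on the half-space {d | d 0 = false} while remaining consistent with some concept in the class). -/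
/-- If `Q` is a set of fewer than `2 ^ k` examples, each with coordinate 0
false, then some concept `φ_l` of the class classifies every example of `Q` as
negative. -/
theorem stmt_10 (k : ℕ) (hk : 1 ≤ k) (Q : Finset (Fin (k + 1) → Bool))
    (hQ : ∀ d ∈ Q, d 0 = false) (hcard : Q.card < 2 ^ k) :
    ∃ l : Fin k → Bool, ∀ d ∈ Q, ¬ concept k l d := by
  set T := Q.image (fun d (j : Fin k) => d j.succ) with hT
  have himg : T.card < 2 ^ k := lt_of_le_of_lt Finset.card_image_le hcard
  have hne : T ≠ Finset.univ := by
    intro h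
    rw [h, Finset.card_univ] at himg
    simp at himg
  obtain ⟨l, hl⟩ : ∃ l, l ∉ T := by
    by_contra h
    push_neg at h
    exact hne (Finset.eq_univ_iff_forall.mpr h)
  refine ⟨l, fun d hd hc => hl ?_⟩
  have htail : (fun j : Fin k => d j.succ) = l := by
    funext j
    rcases hc j with h0 | h1
    · rw [hQ d hd] at h0; cases h0
    · exact h1
  exact Finset.mem_image.mpr ⟨d, hd, htail⟩
end

section
/- Let n : ℕ and v : Fin n → ℝ, and let a, b be values in the range of v with a < b such that no value of v lies strictly between a and b (for all i, ¬(a < v i ∧ v i < b)). Then there exists w : Fin n → ℝ such that: (1) for all indices i, j for which it is not the case that (v i = a ∧ v j = b) nor (v i = b ∧ v j = a), one has (w i < w j ↔ v i < v j) and (w i = w j ↔ v i = v j); and (2) for all i, j with v i = a and v j = b, w i = w j. That is, the equality a = b between the two closest distinct values can be forced while negating exactly the comparison relations between indices of value a and indices of value b, and preserving all other relative-comparison relations. -/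
/-- Given `v : Fin n → ℝ` and values `a < b` in the range of `v` with no
value of `v` strictly between them, there is `w : Fin n → ℝ` forcing `a = b` (indices
of value `a` and value `b` become equal) while preserving all other relative-comparison
relations between coordinates. -/
theorem stmt_11 (n : ℕ) (v : Fin n → ℝ) (a b : ℝ)
    (ha : ∃ i, v i = a) (hb : ∃ j, v j = b) (hab : a < b)
    (hgap : ∀ i, ¬ (a < v i ∧ v i < b)) :
    ∃ w : Fin n → ℝ,
      (∀ i j, ¬ (v i = a ∧ v j = b) → ¬ (v i = b ∧ v j = a) →
        ((w i < w j ↔ v i < v j) ∧ (w i = w j ↔ v i = v j))) ∧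
      (∀ i j, v i = a → v j = b → w i = w j) := by
  have key : ∀ k, v k = a ∨ v k = b ∨ v k < a ∨ b < v k := by
    intro k
    by_cases h1 : v k = a
    · exact Or.inl h1
    by_cases h2 : v k = b
    · exact Or.inr (Or.inl h2)
    rcases lt_or_ge (v k) a with h | h
    · exact Or.inr (Or.inr (Or.inl h))
    rcases lt_or_ge b (v k) with h' | h'
    · exact Or.inr (Or.inr (Or.inr h'))
    exact absurd ⟨lt_of_le_of_ne h (Ne.symm h1), lt_of_le_of_ne h' h2⟩ (hgap k)
  refine ⟨fun i => if v i = a then b else v i, ?_, ?_⟩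
  · intro i j h1 h2
    beta_reduce
    rcases key i with hi | hi | hi | hi <;> rcases key j with hj | hj | hj | hj <;>
      first
        | exact absurd (show v i = a ∧ v j = b from ⟨hi, hj⟩) h1
        | exact absurd (show v i = b ∧ v j = a from ⟨hi, hj⟩) h2
        | (split_ifs with p q <;>
            constructor <;> constructor <;> intro h' <;>
            first
              | linarith
              | exact absurd hi p
              | exact absurd hj q
              | exact absurd hj p
              | exact absurd hi q
              | (exfalso; linarith))
  · intro i j hi hj
    have hja : v j ≠ a := by rw [hj]; exact hab.ne'
    simp [hi, hja, hj]
end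

section
/- Let D be a type, S a set of predicates on D, C a family of cubes (subsets of S), and φ the DNF specification over C. Suppose an example e satisfies a cube c ∈ C (∀ q ∈ c, q e) and, for every other cube c' ∈ C with c' ≠ c, e does not satisfy c'. Let l ∈ c, and let e' be an example with ¬ l e' and such that for every q ∈ S with q ≠ l, (q e' ↔ q e). Then e' is negative for φ. In other words, if e is covered by exactly one cube, then flipping a single literal of that cube (keeping all other predicates of S unchanged) always yields a negative example. -/
/-- If an example `e` is covered by exactly one cube `c` of a DNF over
cubes `C` (subsets of `S`), then flipping a single literal `l ∈ c` while keeping all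
other predicates of `S` unchanged yields a negative example. -/
theorem stmt_12 {D : Type*} (S : Set (D → Prop)) (C : Set (Set (D → Prop)))
    (hC : ∀ c ∈ C, c ⊆ S)
    (e : D) (c : Set (D → Prop)) (hc : c ∈ C)
    (hsat : ∀ q ∈ c, q e)
    (hunique : ∀ c' ∈ C, c' ≠ c → ¬ (∀ q ∈ c', q e))
    (l : D → Prop) (hl : l ∈ c)
    (e' : D) (hne : ¬ l e')
    (hagree : ∀ q ∈ S, q ≠ l → (q e' ↔ q e)) :
    ¬ (∃ c' ∈ C, ∀ q ∈ c', q e') := by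
  rintro ⟨c', hc', hsat'⟩
  by_cases hlc : l ∈ c'
  · exact hne (hsat' l hlc)
  · have hce : ∀ q ∈ c', q e := fun q hq =>
      (hagree q (hC c' hc' hq) (fun h => hlc (h ▸ hq))).mp (hsat' q hq)
    have : c' = c := by
      by_contra h
      exact hunique c' hc' h hce
    exact hlc (this ▸ hl)
end

section
/- Let D be a type, S a set of predicates on D, C a family of cubes (subsets of S), and φ the DNF specification over C. Let con ⊆ S, and let e' be an example that satisfies exactly the predicates of con among S (∀ q ∈ con, q e', and ∀ q ∈ S \ con, ¬ q e'). If e' is positive for φ, then some cube c ∈ C satisfies c ⊆ con, and consequently every example d satisfying all predicates of con is positive for φ. Contrapositively, if some example satisfying con is negative for φ (i.e., con over-generalizes), then e' must be a negative example; hence the example that satisfies con and falsifies all other predicates of S witnesses over-generalization. -/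
/-- Let `e'` satisfy exactly the predicates of `con ⊆ S` among `S`. If
`e'` is positive for the DNF over cubes `C` (subsets of `S`), then some cube is
contained in `con`, so every example satisfying `con` is positive for the DNF.
Contrapositively, if `con` over-generalizes then `e'` is a negative example. -/
theorem stmt_14 {D : Type*} (S : Set (D → Prop)) (C : Set (Set (D → Prop)))
    (hC : ∀ c ∈ C, c ⊆ S)
    (con : Set (D → Prop)) (hcon : con ⊆ S)
    (e' : D) (hsat : ∀ q ∈ con, q e') (hfals : ∀ q ∈ S \ con, ¬ q e')
    (hpos : ∃ c ∈ C, ∀ q ∈ c, q e') :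
    (∃ c ∈ C, c ⊆ con) ∧
      ∀ d : D, (∀ q ∈ con, q d) → ∃ c ∈ C, ∀ q ∈ c, q d := by
  obtain ⟨c, hcC, hce⟩ := hpos
  have hsub : c ⊆ con := by
    intro q hq
    by_contra hqc
    exact hfals q ⟨hC c hcC hq, hqc⟩ (hce q hq)
  exact ⟨⟨c, hcC, hsub⟩, fun d hd => ⟨c, hcC, fun q hq => hd q (hsub hq)⟩⟩
end
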